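/- arXiv:1806.00238 — 4 statements merged into one kernel-verified Lean document; each statement's English description precedes it below -/
import Mathlib

section
/- Let k_T be a bounded kernel on closed interval T and b : ℝ → {0,1} measurable. Then (k_T * b)(t) ≥ 1 if and only if b(τ) = 1 for almost every τ ∈ t + T. Hence the SCL operator ⟨k_T, 1⟩ coincides (up to sets of measure zero) with the globally operator G_T on Boolean signals. -/
open MeasureTheory Set

/-- `(k_T * b)(t) ≥ 1` iff `b = 1` almost everywhere on `t+T`;
hence `⟨k_T,1⟩` coincides a.e. with the globally operator `G_T`. -/
theorem scl_conv_eq_one_iff_ae_globally (k : ℝ → ℝ) (T₀ T₁ : ℝ) (hT : T₀ ≤ T₁)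
    (hk1 : (∫ τ in T₀..T₁, k τ) = 1) (hkpos : ∀ x ∈ Icc T₀ T₁, 0 < k x)
    (b : ℝ → ℝ) (hb : Measurable b) (hbool : ∀ τ, b τ = 0 ∨ b τ = 1) (t : ℝ) :
    1 ≤ (∫ τ in (t + T₀)..(t + T₁), k (τ - t) * b τ)
      ↔ ∀ᵐ τ ∂(volume.restrict (Icc (t + T₀) (t + T₁))), b τ = 1 := by
  have hle : t + T₀ ≤ t + T₁ := by linarith
  have hmeas : MeasurableSet (Ioc (t + T₀) (t + T₁)) := measurableSet_Ioc
  have hrestrict : volume.restrict (Icc (t + T₀) (t + T₁))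
      = volume.restrict (Ioc (t + T₀) (t + T₁)) :=
    (Measure.restrict_congr_set Ioc_ae_eq_Icc).symm
  -- k is interval integrable (otherwise the integral would be 0, not 1)
  have hkInt : IntervalIntegrable k volume T₀ T₁ := by
    by_contra h
    rw [intervalIntegral.integral_undef h] at hk1
    exact one_ne_zero hk1.symm
  have hgInt : IntervalIntegrable (fun τ => k (τ - t)) volume (t + T₀) (t + T₁) := by
    have := hkInt.comp_sub_right t
    simpa [add_comm] using this
  have hgInt' : IntegrableOn (fun τ => k (τ - t)) (Ioc (t + T₀) (t + T₁)) volume := hgInt.1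
  have hbdd : ∃ C, ∀ x, ‖b x‖ ≤ C := by
    refine ⟨1, fun x => ?_⟩
    rcases hbool x with h | h <;> simp [h]
  have hfInt : IntegrableOn (fun τ => k (τ - t) * b τ) (Ioc (t + T₀) (t + T₁)) volume := by
    have := hgInt'.bdd_mul hb.aestronglyMeasurable (Filter.Eventually.of_forall hbdd.choose_spec)
    simpa [IntegrableOn, mul_comm] using this
  have hg1 : (∫ τ in (t + T₀)..(t + T₁), k (τ - t)) = 1 := by
    rw [intervalIntegral.integral_comp_sub_right (fun τ => k τ) t]
    simpa using hk1
  have hg1' : (∫ τ in Ioc (t + T₀) (t + T₁), k (τ - t)) = 1 := by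
    rw [← intervalIntegral.integral_of_le hle]; exact hg1
  have hmem : ∀ τ ∈ Ioc (t + T₀) (t + T₁), τ - t ∈ Icc T₀ T₁ := by
    intro τ hτ
    exact ⟨by linarith [hτ.1], by linarith [hτ.2]⟩
  constructor
  · intro h1
    have hint : 1 ≤ (∫ τ in Ioc (t + T₀) (t + T₁), k (τ - t) * b τ) := by
      rwa [intervalIntegral.integral_of_le hle] at h1
    have hnn : 0 ≤ᵐ[volume.restrict (Ioc (t + T₀) (t + T₁))]
        (fun τ => k (τ - t) - k (τ - t) * b τ) := by
      filter_upwards [ae_restrict_mem hmeas] with τ hτ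
      have hk : 0 < k (τ - t) := hkpos _ (hmem τ hτ)
      rcases hbool τ with h | h <;> simp [h] <;> linarith
    have hdiffInt : IntegrableOn (fun τ => k (τ - t) - k (τ - t) * b τ)
        (Ioc (t + T₀) (t + T₁)) volume := hgInt'.sub hfInt
    have hdiff0 : (∫ τ in Ioc (t + T₀) (t + T₁), (k (τ - t) - k (τ - t) * b τ)) = 0 := by
      have hsub := integral_sub hgInt' hfInt
      have hle0 : (∫ τ in Ioc (t + T₀) (t + T₁), (k (τ - t) - k (τ - t) * b τ)) ≤ 0 := by
        rw [hsub, hg1']; linarith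
      have hge0 : 0 ≤ (∫ τ in Ioc (t + T₀) (t + T₁), (k (τ - t) - k (τ - t) * b τ)) :=
        integral_nonneg_of_ae hnn
      linarith
    have haez := (integral_eq_zero_iff_of_nonneg_ae hnn hdiffInt).mp hdiff0
    rw [hrestrict]
    filter_upwards [haez, ae_restrict_mem hmeas] with τ hz hτ
    have hk : 0 < k (τ - t) := hkpos _ (hmem τ hτ)
    have : k (τ - t) * (1 - b τ) = 0 := by
      have : k (τ - t) - k (τ - t) * b τ = 0 := hz
      ring_nf
      ring_nf at this
      linarith
    rcases mul_eq_zero.mp this with h | h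
    · exact absurd h (ne_of_gt hk)
    · linarith
  · intro hae
    rw [hrestrict] at hae
    have hcong : (fun τ => k (τ - t) * b τ)
        =ᵐ[volume.restrict (Ioc (t + T₀) (t + T₁))] (fun τ => k (τ - t)) := by
      filter_upwards [hae] with τ h
      simp [h]
    have : (∫ τ in Ioc (t + T₀) (t + T₁), k (τ - t) * b τ)
        = ∫ τ in Ioc (t + T₀) (t + T₁), k (τ - t) := integral_congr_ae hcong
    rw [intervalIntegral.integral_of_le hle, this, hg1']
end

section
/- Let k_T be a bounded kernel on closed interval T and b : ℝ → {0,1} measurable. Then (k_T * b)(t) > 0 if and only if the set {τ ∈ t+T : b(τ) = 1} has positive Lebesgue measure. Hence for signals of finite variation (never true only on a null set), ⟨k_T,0⟩* coincides with the eventually operator F_T. -/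
open MeasureTheory Set

/-- `(k_T * b)(t) > 0` iff `{τ ∈ t+T : b τ = 1}` has positive
Lebesgue measure; hence `⟨k_T,0⟩*` coincides with the eventually operator `F_T`. -/
theorem scl_conv_pos_iff_eventually (k : ℝ → ℝ) (T₀ T₁ : ℝ) (hT : T₀ ≤ T₁)
    (hk1 : (∫ τ in T₀..T₁, k τ) = 1) (hkpos : ∀ x ∈ Icc T₀ T₁, 0 < k x)
    (b : ℝ → ℝ) (hb : Measurable b) (hbool : ∀ τ, b τ = 0 ∨ b τ = 1) (t : ℝ) :
    0 < (∫ τ in (t + T₀)..(t + T₁), k (τ - t) * b τ)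
      ↔ 0 < volume {τ ∈ Icc (t + T₀) (t + T₁) | b τ = 1} := by
  -- integrability of k on [T₀,T₁]
  have hkint : IntervalIntegrable k volume T₀ T₁ := by
    by_contra h
    rw [intervalIntegral.integral_undef h] at hk1
    norm_num at hk1
  have hkt : IntervalIntegrable (fun τ => k (τ - t)) volume (t + T₀) (t + T₁) := by
    have := hkint.comp_sub_right t
    simpa [add_comm] using this
  set f : ℝ → ℝ := fun τ => k (τ - t) * b τ with hf
  have hfint : IntegrableOn f (Ioc (t + T₀) (t + T₁)) volume := by
    have h1 : IntegrableOn (fun τ => k (τ - t)) (Ioc (t + T₀) (t + T₁)) volume :=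
      (hkt.1 : _)
    have h2 : Integrable (fun τ => b τ * k (τ - t))
        (volume.restrict (Ioc (t + T₀) (t + T₁))) :=
      Integrable.bdd_mul h1 hb.aestronglyMeasurable
        (c := 1) (Filter.Eventually.of_forall fun x => by rcases hbool x with h | h <;> simp [h])
    simpa [f, mul_comm, IntegrableOn] using h2
  have hle : t + T₀ ≤ t + T₁ := by linarith
  rw [intervalIntegral.integral_of_le hle]
  have hnonneg : 0 ≤ᵐ[volume.restrict (Ioc (t + T₀) (t + T₁))] f := by
    filter_upwards [ae_restrict_mem measurableSet_Ioc] with τ hτ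
    have hk0 : 0 < k (τ - t) := hkpos _ ⟨by linarith [hτ.1], by linarith [hτ.2]⟩
    rcases hbool τ with h | h <;> simp [f, h, le_of_lt hk0]
  rw [setIntegral_pos_iff_support_of_nonneg_ae hnonneg hfint]
  -- identify the support intersection
  have hsupp : Function.support f ∩ Ioc (t + T₀) (t + T₁)
      = {τ ∈ Ioc (t + T₀) (t + T₁) | b τ = 1} := by
    ext τ
    simp only [mem_inter_iff, Function.mem_support, mem_setOf_eq, mem_Ioc]
    constructor
    · rintro ⟨hne, hτ⟩
      refine ⟨hτ, ?_⟩
      rcases hbool τ with h | h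
      · exact absurd (by simp [f, h]) hne
      · exact h
    · rintro ⟨hτ, h1⟩
      have hk0 : 0 < k (τ - t) := hkpos _ ⟨by linarith [hτ.1], by linarith [hτ.2]⟩
      exact ⟨by simp [f, h1]; positivity, hτ⟩
  rw [hsupp]
  constructor
  · intro h
    refine lt_of_lt_of_le h (measure_mono ?_)
    rintro τ ⟨hτ, h1⟩
    exact ⟨⟨le_of_lt hτ.1, hτ.2⟩, h1⟩
  · intro h
    by_contra h'
    push_neg at h'
    have h0 : volume {τ ∈ Ioc (t + T₀) (t + T₁) | b τ = 1} = 0 := le_antisymm h' (by simp)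
    have hsub : {τ ∈ Icc (t + T₀) (t + T₁) | b τ = 1}
        ⊆ {τ ∈ Ioc (t + T₀) (t + T₁) | b τ = 1} ∪ {t + T₀} := by
      rintro τ ⟨hτ, h1⟩
      rcases eq_or_lt_of_le hτ.1 with he | hlt
      · exact Or.inr (by simp [he.symm])
      · exact Or.inl ⟨⟨hlt, hτ.2⟩, h1⟩
    have : volume {τ ∈ Icc (t + T₀) (t + T₁) | b τ = 1} = 0 := by
      refine measure_mono_null hsub ?_
      rw [measure_union_null_iff]
      exact ⟨h0, measure_singleton _⟩
    rw [this] at h; exact lt_irrefl _ h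
end

section
/- Expressiveness separation: there exists no formula of STL(F,G) over a single Boolean atomic proposition that is equivalent (on all finite-variation Boolean signals on [0,3]) to the SCL formula ⟨flat_{[0,3]}, 1/2⟩ p, which holds iff the Lebesgue measure of {τ ∈ [0,3] : p holds at τ} is at least 3/2. Concretely: for any STL(F,G) formula ψ there exist two finite-variation Boolean signals b₁, b₂ such that b₁ satisfies the measure condition and b₂ does not, while ψ evaluates identically on b₁ and b₂. -/
open MeasureTheory Set

/-- STL(F,G) formulas over a single Boolean atomic proposition `p`. -/
inductive STLFG where
  | atom : STLFG
  | not (φ : STLFG) : STLFG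
  | or (φ ψ : STLFG) : STLFG
  | F (a b : ℝ) (φ : STLFG) : STLFG
  | G (a b : ℝ) (φ : STLFG) : STLFG

/-- Semantics of STL(F,G) on Boolean signals. -/
def STLFG.sat : STLFG → (ℝ → Bool) → ℝ → Prop
  | .atom, s, t => s t = true
  | .not φ, s, t => ¬ φ.sat s t
  | .or φ ψ, s, t => φ.sat s t ∨ ψ.sat s t
  | .F a b φ, s, t => ∃ τ ∈ Icc (t + a) (t + b), φ.sat s τ
  | .G a b φ, s, t => ∀ τ ∈ Icc (t + a) (t + b), φ.sat s τ

/-- A finite-variation Boolean signal: true exactly on a finite union of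
intervals of positive length. -/
def FiniteVariation (s : ℝ → Bool) : Prop :=
  ∃ I : Finset (ℝ × ℝ), (∀ q ∈ I, q.1 < q.2) ∧
    ∀ τ : ℝ, s τ = true ↔ ∃ q ∈ I, τ ∈ Icc q.1 q.2

open scoped Classical

namespace SCLSep


/-- Prop-level semantics. -/
def satP : STLFG → (ℝ → Prop) → ℝ → Prop
  | .atom, s, t => s t
  | .not φ, s, t => ¬ satP φ s t
  | .or φ ψ, s, t => satP φ s t ∨ satP ψ s t
  | .F a b φ, s, t => ∃ τ ∈ Icc (t + a) (t + b), satP φ s τ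
  | .G a b φ, s, t => ∀ τ ∈ Icc (t + a) (t + b), satP φ s τ

lemma sat_iff_satP (φ : STLFG) (S : ℝ → Prop) (t : ℝ) :
    STLFG.sat φ (fun τ => decide (S τ)) t ↔ satP φ S t := by
  induction φ generalizing t with
  | atom => simp [STLFG.sat, satP]
  | not φ ih => simp [STLFG.sat, satP, ih]
  | or φ ψ ih1 ih2 => simp [STLFG.sat, satP, ih1, ih2]
  | F a b φ ih => simp [STLFG.sat, satP, ih]
  | G a b φ ih => simp [STLFG.sat, satP, ih]

/-- Horizon radius of a formula. -/
noncomputable def hz : STLFG → ℝ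
  | .atom => 0
  | .not φ => hz φ
  | .or φ ψ => max (hz φ) (hz ψ)
  | .F a b φ => max |a| |b| + hz φ
  | .G a b φ => max |a| |b| + hz φ

lemma hz_nonneg (φ : STLFG) : 0 ≤ hz φ := by
  induction φ with
  | atom => simp [hz]
  | not φ ih => simpa [hz] using ih
  | or φ ψ ih1 ih2 => simp [hz]; left; exact ih1
  | F a b φ ih => simp [hz]; positivity
  | G a b φ ih => simp [hz]; positivity

/-- Locality: satisfaction only depends on the signal within the horizon. -/
lemma satP_congr (φ : STLFG) (S₁ S₂ : ℝ → Prop) (t : ℝ)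
    (h : ∀ τ, |τ - t| ≤ hz φ → (S₁ τ ↔ S₂ τ)) :
    satP φ S₁ t ↔ satP φ S₂ t := by
  induction φ generalizing t with
  | atom => exact h t (by simp [hz])
  | not φ ih => exact not_congr (ih t (by simpa [hz] using h))
  | or φ ψ ih1 ih2 =>
      exact or_congr (ih1 t fun τ hτ => h τ (le_trans hτ (by simp [hz])))
        (ih2 t fun τ hτ => h τ (le_trans hτ (by simp [hz])))
  | F a b φ ih =>
      simp only [satP]
      refine exists_congr fun τ => and_congr_right fun hτ => ih τ fun ρ hρ => h ρ ?_
      simp only [Icc, mem_setOf_eq] at hτ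
      have h1 : |τ - t| ≤ max |a| |b| := by
        rw [abs_le]
        constructor
        · have := hτ.1; have : -( |a| ) ≤ a := neg_abs_le a; nlinarith [le_max_left |a| |b|, hτ.1]
        · nlinarith [le_max_right |a| |b|, le_abs_self b, hτ.2]
      calc |ρ - t| ≤ |ρ - τ| + |τ - t| := abs_sub_le _ _ _
        _ ≤ hz φ + max |a| |b| := add_le_add hρ h1
        _ = hz (.F a b φ) := by simp [hz]; ring
  | G a b φ ih =>
      simp only [satP]
      refine forall_congr' fun τ => imp_congr_right fun hτ => ih τ fun ρ hρ => h ρ ?_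
      simp only [Icc, mem_setOf_eq] at hτ
      have h1 : |τ - t| ≤ max |a| |b| := by
        rw [abs_le]
        constructor
        · have : -( |a| ) ≤ a := neg_abs_le a; nlinarith [le_max_left |a| |b|, hτ.1]
        · nlinarith [le_max_right |a| |b|, le_abs_self b, hτ.2]
      calc |ρ - t| ≤ |ρ - τ| + |τ - t| := abs_sub_le _ _ _
        _ ≤ hz φ + max |a| |b| := add_le_add hρ h1
        _ = hz (.G a b φ) := by simp [hz]; ring



/-- number of point-test operators (a = b). -/
noncomputable def pc : STLFG → ℕ
  | .atom => 0
  | .not φ => pc φ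
  | .or φ ψ => pc φ + pc ψ
  | .F a b φ => if a = b then pc φ + 1 else pc φ
  | .G a b φ => if a = b then pc φ + 1 else pc φ

/-- point-test constants. -/
noncomputable def PCs : STLFG → Finset ℝ
  | .atom => ∅
  | .not φ => PCs φ
  | .or φ ψ => PCs φ ∪ PCs ψ
  | .F a b φ => (if a = b then {a} else ∅) ∪ PCs φ
  | .G a b φ => (if a = b then {a} else ∅) ∪ PCs φ

/-- minimal width of genuine temporal windows. -/
noncomputable def mw : STLFG → ℝ
  | .atom => 1
  | .not φ => mw φ
  | .or φ ψ => min (mw φ) (mw ψ)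
  | .F a b φ => if a < b then min (b - a) (mw φ) else mw φ
  | .G a b φ => if a < b then min (b - a) (mw φ) else mw φ

lemma mw_pos (φ : STLFG) : 0 < mw φ := by
  induction φ with
  | atom => norm_num [mw]
  | not φ ih => simpa [mw] using ih
  | or φ ψ ih1 ih2 => simp [mw]; exact ⟨ih1, ih2⟩
  | F a b φ ih => by_cases h : a < b <;> simp [mw, h, ih] <;> linarith
  | G a b φ ih => by_cases h : a < b <;> simp [mw, h, ih] <;> linarith

/-- the (unbounded) square wave with period δ and pulse length u. -/
def Wv (δ u τ : ℝ) : Prop := ∃ k : ℤ, (k : ℝ) * δ ≤ τ ∧ τ ≤ k * δ + u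

lemma Wv_iff {δ u : ℝ} (hδ : 0 < δ) (hu : u < δ) (k : ℤ) (r : ℝ)
    (h0 : 0 ≤ r) (h1 : r < δ) : Wv δ u ((k : ℝ) * δ + r) ↔ r ≤ u := by
  constructor
  · rintro ⟨k', hl, hr⟩
    have hk : k' = k := by
      have c1 : (k' : ℝ) * δ ≤ k * δ + r := hl
      have c2 : (k : ℝ) * δ + r ≤ k' * δ + u := hr
      have d1 : ((k' : ℝ) - k) * δ < 1 * δ := by nlinarith
      have d2 : (-1 : ℝ) * δ < ((k' : ℝ) - k) * δ := by nlinarith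
      have e1 : ((k' : ℝ) - k) < 1 := lt_of_mul_lt_mul_right d1 hδ.le
      have e2 : (-1 : ℝ) < ((k' : ℝ) - k) := lt_of_mul_lt_mul_right d2 hδ.le
      have : (k' : ℝ) < k + 1 := by linarith
      have h1' : k' < k + 1 := by exact_mod_cast this
      have : ((k : ℝ)) - 1 < k' := by linarith
      have h2' : k - 1 < k' := by exact_mod_cast this
      omega
    subst hk; linarith [hr]
  · intro h; exact ⟨k, by linarith, by linarith⟩

lemma exists_res {δ : ℝ} (hδ : 0 < δ) (τ : ℝ) :
    ∃ k : ℤ, ∃ r : ℝ, τ = (k : ℝ) * δ + r ∧ 0 ≤ r ∧ r < δ := by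
  refine ⟨⌊τ / δ⌋, τ - ⌊τ / δ⌋ * δ, by ring, ?_, ?_⟩
  · have := Int.floor_le (τ / δ)
    have : (⌊τ / δ⌋ : ℝ) * δ ≤ (τ / δ) * δ := by nlinarith
    have : (τ / δ) * δ = τ := by field_simp
    linarith [mul_le_mul_of_nonneg_right (Int.floor_le (τ / δ)) hδ.le,
      (div_mul_cancel₀ τ (ne_of_gt hδ))]
  · have h2 : τ / δ < ⌊τ / δ⌋ + 1 := Int.lt_floor_add_one _
    have := mul_lt_mul_of_pos_right h2 hδ
    have h3 : (τ / δ) * δ = τ := div_mul_cancel₀ τ (ne_of_gt hδ)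
    nlinarith

lemma exists_rep {δ : ℝ} (hδ : 0 < δ) (r x : ℝ) :
    ∃ k : ℤ, x ≤ (k : ℝ) * δ + r ∧ (k : ℝ) * δ + r < x + δ := by
  refine ⟨⌈(x - r) / δ⌉, ?_, ?_⟩
  · have := Int.le_ceil ((x - r) / δ)
    have h := mul_le_mul_of_nonneg_right this hδ.le
    rw [div_mul_cancel₀ _ (ne_of_gt hδ)] at h
    linarith
  · have := Int.ceil_lt_add_one ((x - r) / δ)
    have h := mul_lt_mul_of_pos_right this hδ
    rw [add_mul, div_mul_cancel₀ _ (ne_of_gt hδ)] at h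
    linarith

noncomputable def capA (m n : ℕ) (ε : ℝ) : ℝ := (4 * ((m : ℝ) + 1) - n) * ε
noncomputable def capC (m n : ℕ) (ε : ℝ) : ℝ := ((m : ℝ) + 1 + n) * ε

/-- the matching relation between positions on the two waves. -/
def M (m : ℕ) (ε δ : ℝ) (n : ℕ) (τ₁ τ₂ : ℝ) : Prop :=
  (∃ k₁ k₂ : ℤ, ∃ r : ℝ, τ₁ = k₁ * δ + r ∧ τ₂ = k₂ * δ + r ∧ |r| ≤ capA m n ε) ∨
  (∃ k₁ k₂ : ℤ, ∃ r : ℝ, τ₁ = k₁ * δ + δ/4 + r ∧ τ₂ = k₂ * δ + 3*δ/4 + r ∧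
    |r| ≤ capA m n ε) ∨
  (∃ k₁ k₂ : ℤ, ∃ r₁ r₂ : ℝ, τ₁ = k₁ * δ + r₁ ∧ τ₂ = k₂ * δ + r₂ ∧
    capC m n ε ≤ r₁ ∧ r₁ ≤ δ/4 - capC m n ε ∧ capC m n ε ≤ r₂ ∧
    r₂ ≤ 3*δ/4 - capC m n ε) ∨
  (∃ k₁ k₂ : ℤ, ∃ r₁ r₂ : ℝ, τ₁ = k₁ * δ + r₁ ∧ τ₂ = k₂ * δ + r₂ ∧
    δ/4 + capC m n ε ≤ r₁ ∧ r₁ ≤ δ - capC m n ε ∧ 3*δ/4 + capC m n ε ≤ r₂ ∧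
    r₂ ≤ δ - capC m n ε)

section
variable {m : ℕ} {ε δ : ℝ}

lemma M_mono (hε : 0 < ε) {n n' : ℕ} (h : n' ≤ n) {τ₁ τ₂ : ℝ}
    (hM : M m ε δ n τ₁ τ₂) : M m ε δ n' τ₁ τ₂ := by
  have hA : capA m n ε ≤ capA m n' ε := by
    unfold capA; have : (n' : ℝ) ≤ n := by exact_mod_cast h
    nlinarith
  have hC : capC m n' ε ≤ capC m n ε := by
    unfold capC; have : (n' : ℝ) ≤ n := by exact_mod_cast h
    nlinarith
  rcases hM with ⟨k₁, k₂, r, h1, h2, h3⟩ | ⟨k₁, k₂, r, h1, h2, h3⟩ |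
    ⟨k₁, k₂, r₁, r₂, h1, h2, h3, h4, h5, h6⟩ | ⟨k₁, k₂, r₁, r₂, h1, h2, h3, h4, h5, h6⟩
  · exact Or.inl ⟨k₁, k₂, r, h1, h2, le_trans h3 hA⟩
  · exact Or.inr (Or.inl ⟨k₁, k₂, r, h1, h2, le_trans h3 hA⟩)
  · exact Or.inr (Or.inr (Or.inl ⟨k₁, k₂, r₁, r₂, h1, h2, by linarith, by linarith,
      by linarith, by linarith⟩))
  · exact Or.inr (Or.inr (Or.inr ⟨k₁, k₂, r₁, r₂, h1, h2, by linarith, by linarith,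
      by linarith, by linarith⟩))

lemma M_shift (hε : 0 < ε) {n : ℕ} {τ₁ τ₂ c : ℝ} {kc : ℤ}
    (hc : |c - kc * δ| ≤ ε) (hM : M m ε δ (n + 1) τ₁ τ₂) :
    M m ε δ n (τ₁ + c) (τ₂ + c) := by
  set rc := c - (kc : ℝ) * δ with hrc
  have hcc : c = kc * δ + rc := by rw [hrc]; ring
  have hA : capA m (n+1) ε + ε = capA m n ε := by unfold capA; push_cast; ring
  have hC : capC m (n+1) ε = capC m n ε + ε := by unfold capC; push_cast; ring
  have habs := abs_le.mp hc
  rcases hM with ⟨k₁, k₂, r, h1, h2, h3⟩ | ⟨k₁, k₂, r, h1, h2, h3⟩ |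
    ⟨k₁, k₂, r₁, r₂, h1, h2, h3, h4, h5, h6⟩ | ⟨k₁, k₂, r₁, r₂, h1, h2, h3, h4, h5, h6⟩
  · refine Or.inl ⟨k₁ + kc, k₂ + kc, r + rc, by push_cast; rw [h1, hcc]; ring,
      by push_cast; rw [h2, hcc]; ring, ?_⟩
    have := abs_le.mp h3
    rw [abs_le]; constructor <;> [nlinarith [hA]; nlinarith [hA]]
  · refine Or.inr (Or.inl ⟨k₁ + kc, k₂ + kc, r + rc, by push_cast; rw [h1, hcc]; ring,
      by push_cast; rw [h2, hcc]; ring, ?_⟩)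
    have := abs_le.mp h3
    rw [abs_le]; constructor <;> [nlinarith [hA]; nlinarith [hA]]
  · refine Or.inr (Or.inr (Or.inl ⟨k₁ + kc, k₂ + kc, r₁ + rc, r₂ + rc,
      by push_cast; rw [h1, hcc]; ring, by push_cast; rw [h2, hcc]; ring,
      ?_, ?_, ?_, ?_⟩)) <;> [skip; skip; skip; skip] <;> rw [hC] at * <;> linarith
  · refine Or.inr (Or.inr (Or.inr ⟨k₁ + kc, k₂ + kc, r₁ + rc, r₂ + rc,
      by push_cast; rw [h1, hcc]; ring, by push_cast; rw [h2, hcc]; ring,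
      ?_, ?_, ?_, ?_⟩)) <;> rw [hC] at * <;> linarith

/-- At matched positions with all budget consumed, the two waves agree. -/
lemma atom_agree (hε : 0 < ε) (hδ : δ = 40 * ((m : ℝ) + 1) * ε) {τ₁ τ₂ : ℝ}
    (hM : M m ε δ 0 τ₁ τ₂) : (Wv δ (δ/4) τ₁ ↔ Wv δ (3*δ/4) τ₂) := by
  have hE : 0 < ((m : ℝ) + 1) * ε := by positivity
  have hδ0 : 0 < δ := by rw [hδ]; positivity
  have hcapA : capA m 0 ε = 4 * (((m : ℝ) + 1) * ε) := by unfold capA; push_cast; ring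
  have hcapC : capC m 0 ε = ((m : ℝ) + 1) * ε := by unfold capC; push_cast; ring
  set E := ((m : ℝ) + 1) * ε with hEdef
  have hδE : δ = 40 * E := by rw [hδ]; ring
  rcases hM with ⟨k₁, k₂, r, h1, h2, h3⟩ | ⟨k₁, k₂, r, h1, h2, h3⟩ |
    ⟨k₁, k₂, r₁, r₂, h1, h2, h3, h4, h5, h6⟩ | ⟨k₁, k₂, r₁, r₂, h1, h2, h3, h4, h5, h6⟩
  · rw [hcapA] at h3; have h3' := abs_le.mp h3
    rcases le_or_gt 0 r with hr | hr
    · rw [h1, h2, Wv_iff hδ0 (by linarith) k₁ r hr (by linarith),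
        Wv_iff hδ0 (by linarith) k₂ r hr (by linarith)]
      constructor <;> intro <;> linarith
    · have e1 : τ₁ = ((k₁ - 1 : ℤ) : ℝ) * δ + (δ + r) := by push_cast; rw [h1]; ring
      have e2 : τ₂ = ((k₂ - 1 : ℤ) : ℝ) * δ + (δ + r) := by push_cast; rw [h2]; ring
      rw [e1, e2, Wv_iff hδ0 (by linarith) _ _ (by linarith) (by linarith),
        Wv_iff hδ0 (by linarith) _ _ (by linarith) (by linarith)]
      constructor <;> intro <;> linarith
  · rw [hcapA] at h3; have h3' := abs_le.mp h3
    have e1 : τ₁ = (k₁ : ℝ) * δ + (δ/4 + r) := by rw [h1]; ring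
    have e2 : τ₂ = (k₂ : ℝ) * δ + (3*δ/4 + r) := by rw [h2]; ring
    rw [e1, e2, Wv_iff hδ0 (by linarith) _ _ (by linarith) (by linarith),
      Wv_iff hδ0 (by linarith) _ _ (by linarith) (by linarith)]
    constructor <;> intro <;> linarith
  · rw [hcapC] at *
    rw [h1, h2, Wv_iff hδ0 (by linarith) _ _ (by linarith) (by linarith),
      Wv_iff hδ0 (by linarith) _ _ (by linarith) (by linarith)]
    constructor <;> intro <;> linarith
  · rw [hcapC] at *
    rw [h1, h2, Wv_iff hδ0 (by linarith) _ _ (by linarith) (by linarith),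
      Wv_iff hδ0 (by linarith) _ _ (by linarith) (by linarith)]
    constructor <;> intro <;> linarith

lemma cover₁ (hε : 0 < ε) (hδ : δ = 40 * ((m : ℝ) + 1) * ε) {n : ℕ} (hn : n ≤ m)
    (ρ₁ x y : ℝ) (hxy : x + δ ≤ y) :
    ∃ ρ₂, ρ₂ ∈ Icc x y ∧ M m ε δ n ρ₁ ρ₂ := by
  have hδ0 : 0 < δ := by rw [hδ]; positivity
  have hnm : (n : ℝ) ≤ m := by exact_mod_cast hn
  set C := capC m n ε with hC
  have hC0 : 0 < C := by rw [hC]; unfold capC; positivity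
  have hC2 : C ≤ δ/20 := by
    rw [hC]; unfold capC; rw [hδ]; nlinarith
  have hCA : C ≤ capA m n ε := by
    rw [hC]; unfold capA capC; nlinarith
  obtain ⟨k, r, hkr, hr0, hr1⟩ := exists_res hδ0 ρ₁
  rcases le_or_gt r C with c1 | c1
  · -- case (a): same residue
    obtain ⟨k', hk1, hk2⟩ := exists_rep hδ0 r x
    exact ⟨k' * δ + r, ⟨hk1, by linarith⟩, Or.inl ⟨k, k', r, hkr, rfl,
      by rw [abs_of_nonneg hr0]; linarith⟩⟩
  · rcases le_or_gt r (δ/4 - C) with c2 | c2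
    · -- case (c): true interiors
      obtain ⟨k', hk1, hk2⟩ := exists_rep hδ0 r x
      exact ⟨k' * δ + r, ⟨hk1, by linarith⟩, Or.inr (Or.inr (Or.inl
        ⟨k, k', r, r, hkr, rfl, by linarith, by linarith, by linarith, by linarith⟩))⟩
    · rcases le_or_gt r (δ/4 + C) with c3 | c3
      · -- case (b): duty boundary
        obtain ⟨k', hk1, hk2⟩ := exists_rep hδ0 (3*δ/4 + (r - δ/4)) x
        refine ⟨k' * δ + (3*δ/4 + (r - δ/4)), ⟨hk1, by linarith⟩, Or.inr (Or.inl
          ⟨k, k', r - δ/4, by rw [hkr]; ring, by ring, ?_⟩)⟩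
        rw [abs_le]; constructor <;> linarith
      · rcases le_or_gt r (δ - C) with c4 | c4
        · -- case (d): false interiors, target residue 7δ/8
          obtain ⟨k', hk1, hk2⟩ := exists_rep hδ0 (7*δ/8) x
          exact ⟨k' * δ + 7*δ/8, ⟨hk1, by linarith⟩, Or.inr (Or.inr (Or.inr
            ⟨k, k', r, 7*δ/8, hkr, rfl, by linarith, by linarith, by linarith,
             by linarith⟩))⟩
        · -- case (a) wrapped
          obtain ⟨k', hk1, hk2⟩ := exists_rep hδ0 (r - δ) x
          refine ⟨k' * δ + (r - δ), ⟨hk1, by linarith⟩, Or.inl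
            ⟨k + 1, k', r - δ, by push_cast; rw [hkr]; ring, rfl, ?_⟩⟩
          rw [abs_le]; constructor <;> linarith
  
lemma cover₂ (hε : 0 < ε) (hδ : δ = 40 * ((m : ℝ) + 1) * ε) {n : ℕ} (hn : n ≤ m)
    (ρ₂ x y : ℝ) (hxy : x + δ ≤ y) :
    ∃ ρ₁, ρ₁ ∈ Icc x y ∧ M m ε δ n ρ₁ ρ₂ := by
  have hδ0 : 0 < δ := by rw [hδ]; positivity
  have hnm : (n : ℝ) ≤ m := by exact_mod_cast hn
  set C := capC m n ε with hC
  have hC0 : 0 < C := by rw [hC]; unfold capC; positivity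
  have hC2 : C ≤ δ/20 := by
    rw [hC]; unfold capC; rw [hδ]; nlinarith
  have hCA : C ≤ capA m n ε := by
    rw [hC]; unfold capA capC; nlinarith
  obtain ⟨k, r, hkr, hr0, hr1⟩ := exists_res hδ0 ρ₂
  rcases le_or_gt r C with c1 | c1
  · obtain ⟨k', hk1, hk2⟩ := exists_rep hδ0 r x
    exact ⟨k' * δ + r, ⟨hk1, by linarith⟩, Or.inl ⟨k', k, r, rfl, hkr,
      by rw [abs_of_nonneg hr0]; linarith⟩⟩
  · rcases le_or_gt r (3*δ/4 - C) with c2 | c2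
    · -- case (c) with r₁ := δ/8
      obtain ⟨k', hk1, hk2⟩ := exists_rep hδ0 (δ/8) x
      exact ⟨k' * δ + δ/8, ⟨hk1, by linarith⟩, Or.inr (Or.inr (Or.inl
        ⟨k', k, δ/8, r, rfl, hkr, by linarith, by linarith, by linarith, by linarith⟩))⟩
    · rcases le_or_gt r (3*δ/4 + C) with c3 | c3
      · -- case (b)
        obtain ⟨k', hk1, hk2⟩ := exists_rep hδ0 (δ/4 + (r - 3*δ/4)) x
        refine ⟨k' * δ + (δ/4 + (r - 3*δ/4)), ⟨hk1, by linarith⟩, Or.inr (Or.inl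
          ⟨k', k, r - 3*δ/4, by ring, by rw [hkr]; ring, ?_⟩)⟩
        rw [abs_le]; constructor <;> linarith
      · rcases le_or_gt r (δ - C) with c4 | c4
        · -- case (d) with r₁ := 7δ/8
          obtain ⟨k', hk1, hk2⟩ := exists_rep hδ0 (7*δ/8) x
          exact ⟨k' * δ + 7*δ/8, ⟨hk1, by linarith⟩, Or.inr (Or.inr (Or.inr
            ⟨k', k, 7*δ/8, r, rfl, hkr, by linarith, by linarith, by linarith,
             by linarith⟩))⟩
        · obtain ⟨k', hk1, hk2⟩ := exists_rep hδ0 (r - δ) x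
          refine ⟨k' * δ + (r - δ), ⟨hk1, by linarith⟩, Or.inl
            ⟨k', k + 1, r - δ, rfl, by push_cast; rw [hkr]; ring, ?_⟩⟩
          rw [abs_le]; constructor <;> linarith

/-- The main induction: a formula cannot distinguish the two waves at matched
positions. -/
lemma main_ind (hε : 0 < ε) (hδ : δ = 40 * ((m : ℝ) + 1) * ε) (φ : STLFG)
    (hpc : pc φ ≤ m) (hmw : δ ≤ mw φ)
    (hnear : ∀ c ∈ PCs φ, ∃ k : ℤ, |c - (k : ℝ) * δ| ≤ ε) :
    ∀ τ₁ τ₂, M m ε δ (pc φ) τ₁ τ₂ →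
      (satP φ (Wv δ (δ/4)) τ₁ ↔ satP φ (Wv δ (3*δ/4)) τ₂) := by
  induction φ with
  | atom =>
      intro τ₁ τ₂ hM
      exact atom_agree hε hδ (by simpa [pc] using hM)
  | not φ ih =>
      intro τ₁ τ₂ hM
      exact not_congr (ih hpc hmw hnear τ₁ τ₂ hM)
  | or φ ψ ih1 ih2 =>
      intro τ₁ τ₂ hM
      simp only [pc] at hpc hM
      simp only [mw, le_min_iff] at hmw
      simp only [PCs, Finset.mem_union] at hnear
      exact or_congr
        (ih1 (le_trans (Nat.le_add_right _ _) hpc) hmw.1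
          (fun c hc => hnear c (Or.inl hc)) τ₁ τ₂
          (M_mono hε (Nat.le_add_right _ _) hM))
        (ih2 (le_trans (Nat.le_add_left _ _) hpc) hmw.2
          (fun c hc => hnear c (Or.inr hc)) τ₁ τ₂
          (M_mono hε (Nat.le_add_left _ _) hM))
  | F a b φ ih =>
      intro τ₁ τ₂ hM
      rcases lt_trichotomy a b with hab | hab | hab
      · -- coarse case
        have hne : ¬ (a = b) := ne_of_lt hab
        simp only [pc, if_neg hne] at hpc hM
        simp only [mw, if_pos hab, le_min_iff] at hmw
        simp only [PCs, if_neg hne, Finset.empty_union] at hnear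
        simp only [satP]
        constructor
        · rintro ⟨ρ₁, hρ₁, hsat⟩
          obtain ⟨ρ₂, hρ₂, hM'⟩ := cover₁ hε hδ hpc ρ₁ (τ₂ + a) (τ₂ + b)
            (by linarith [hmw.1])
          exact ⟨ρ₂, hρ₂, (ih hpc hmw.2 hnear ρ₁ ρ₂ hM').mp hsat⟩
        · rintro ⟨ρ₂, hρ₂, hsat⟩
          obtain ⟨ρ₁, hρ₁, hM'⟩ := cover₂ hε hδ hpc ρ₂ (τ₁ + a) (τ₁ + b)
            (by linarith [hmw.1])
          exact ⟨ρ₁, hρ₁, (ih hpc hmw.2 hnear ρ₁ ρ₂ hM').mpr hsat⟩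
      · -- point case
        subst hab
        simp only [pc, if_pos rfl] at hpc hM
        simp only [mw, lt_irrefl, if_neg (lt_irrefl a)] at hmw
        simp only [PCs, eq_self_iff_true, if_true, Finset.mem_union, Finset.mem_singleton] at hnear
        obtain ⟨kc, hkc⟩ := hnear a (Or.inl rfl)
        have hM' := M_shift hε hkc hM
        have := ih (le_trans (Nat.le_succ _) hpc) hmw
          (fun c hc => hnear c (Or.inr hc)) (τ₁ + a) (τ₂ + a) hM'
        simp only [satP, Icc_self, mem_singleton_iff]
        constructor
        · rintro ⟨τ, rfl, hs⟩; exact ⟨τ₂ + a, rfl, this.mp hs⟩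
        · rintro ⟨τ, rfl, hs⟩; exact ⟨τ₁ + a, rfl, this.mpr hs⟩
      · -- empty case
        have h1 : τ₁ + b < τ₁ + a := by linarith
        have h2 : τ₂ + b < τ₂ + a := by linarith
        simp only [satP, Icc_eq_empty_of_lt h1, Icc_eq_empty_of_lt h2]
        simp
  | G a b φ ih =>
      intro τ₁ τ₂ hM
      rcases lt_trichotomy a b with hab | hab | hab
      · have hne : ¬ (a = b) := ne_of_lt hab
        simp only [pc, if_neg hne] at hpc hM
        simp only [mw, if_pos hab, le_min_iff] at hmw
        simp only [PCs, if_neg hne, Finset.empty_union] at hnear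
        simp only [satP]
        constructor
        · intro hall ρ₂ hρ₂
          obtain ⟨ρ₁, hρ₁, hM'⟩ := cover₂ hε hδ hpc ρ₂ (τ₁ + a) (τ₁ + b)
            (by linarith [hmw.1])
          exact (ih hpc hmw.2 hnear ρ₁ ρ₂ hM').mp (hall ρ₁ hρ₁)
        · intro hall ρ₁ hρ₁
          obtain ⟨ρ₂, hρ₂, hM'⟩ := cover₁ hε hδ hpc ρ₁ (τ₂ + a) (τ₂ + b)
            (by linarith [hmw.1])
          exact (ih hpc hmw.2 hnear ρ₁ ρ₂ hM').mpr (hall ρ₂ hρ₂)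
      · subst hab
        simp only [pc, if_pos rfl] at hpc hM
        simp only [mw, if_neg (lt_irrefl a)] at hmw
        simp only [PCs, eq_self_iff_true, if_true, Finset.mem_union, Finset.mem_singleton] at hnear
        obtain ⟨kc, hkc⟩ := hnear a (Or.inl rfl)
        have hM' := M_shift hε hkc hM
        have := ih (le_trans (Nat.le_succ _) hpc) hmw
          (fun c hc => hnear c (Or.inr hc)) (τ₁ + a) (τ₂ + a) hM'
        simp only [satP, Icc_self, mem_singleton_iff]
        constructor
        · rintro hall; intro τ hτ; subst hτ; exact this.mp (hall _ rfl)
        · rintro hall; intro τ hτ; subst hτ; exact this.mpr (hall _ rfl)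
      · have h1 : τ₁ + b < τ₁ + a := by linarith
        have h2 : τ₂ + b < τ₂ + a := by linarith
        simp only [satP, Icc_eq_empty_of_lt h1, Icc_eq_empty_of_lt h2]
        simp

end

/-- Simultaneous Dirichlet approximation via pigeonhole. -/
lemma dirichlet (S : Finset ℝ) (B K₁ : ℕ) (hB : 0 < B) (hK₁ : 0 < K₁) :
    ∃ K : ℕ, K₁ ≤ K ∧ ∀ c ∈ S, ∃ k : ℤ, |c * K - k| ≤ 1 / B := by
  have hBR : (0 : ℝ) < B := by exact_mod_cast hB
  have hbox : ∀ x : ℝ, (⌊Int.fract x * B⌋).toNat < B := by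
    intro x
    have h0 : (0 : ℝ) ≤ Int.fract x * B := by
      have := Int.fract_nonneg x; positivity
    have h1 : Int.fract x * B < B := by
      have := Int.fract_lt_one x; nlinarith
    have : ⌊Int.fract x * B⌋ < B := Int.floor_lt.2 (by exact_mod_cast h1)
    omega
  set f : Fin (B ^ S.card + 1) → (S → Fin B) := fun j c =>
    ⟨(⌊Int.fract ((c : ℝ) * ((j : ℕ) * K₁)) * B⌋).toNat, hbox _⟩ with hf
  have hcard : Fintype.card (S → Fin B) < Fintype.card (Fin (B ^ S.card + 1)) := by
    simp [Fintype.card_fun]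
  obtain ⟨i₁, i₂, hne, heq⟩ := Fintype.exists_ne_map_eq_of_card_lt f hcard
  have key : ∀ j₁ j₂ : Fin (B ^ S.card + 1), j₁ < j₂ → f j₁ = f j₂ →
      ∃ K : ℕ, K₁ ≤ K ∧ ∀ c ∈ S, ∃ k : ℤ, |c * K - k| ≤ 1 / B := by
    intro j₁ j₂ hlt heq
    refine ⟨((j₂ : ℕ) - (j₁ : ℕ)) * K₁, ?_, ?_⟩
    · have h1 : 1 ≤ (j₂ : ℕ) - (j₁ : ℕ) := by
        have : (j₁ : ℕ) < (j₂ : ℕ) := hlt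
        omega
      calc K₁ = 1 * K₁ := (one_mul _).symm
        _ ≤ ((j₂ : ℕ) - (j₁ : ℕ)) * K₁ := Nat.mul_le_mul_right _ h1
    · intro c hc
      have h := congrFun heq ⟨c, hc⟩
      rw [hf] at h
      simp only [Fin.mk.injEq] at h
      set x₁ := c * ((j₁ : ℕ) * K₁) with hx₁
      set x₂ := c * ((j₂ : ℕ) * K₁) with hx₂
      have h0₁ : 0 ≤ ⌊Int.fract x₁ * B⌋ := Int.floor_nonneg.2 (by
        have := Int.fract_nonneg x₁; positivity)
      have h0₂ : 0 ≤ ⌊Int.fract x₂ * B⌋ := Int.floor_nonneg.2 (by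
        have := Int.fract_nonneg x₂; positivity)
      have hfl : ⌊Int.fract x₁ * B⌋ = ⌊Int.fract x₂ * B⌋ := by omega
      have hdiff : |Int.fract x₂ * B - Int.fract x₁ * B| < 1 := by
        have a1 := Int.floor_le (Int.fract x₁ * B)
        have a2 := Int.lt_floor_add_one (Int.fract x₁ * B)
        have a3 := Int.floor_le (Int.fract x₂ * B)
        have a4 := Int.lt_floor_add_one (Int.fract x₂ * B)
        rw [hfl] at a1 a2
        rw [abs_lt]; constructor <;> linarith
      refine ⟨⌊x₂⌋ - ⌊x₁⌋, ?_⟩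
      have e1 : c * (↑(((j₂ : ℕ) - (j₁ : ℕ)) * K₁) : ℝ) = x₂ - x₁ := by
        rw [hx₁, hx₂]
        have hle : (j₁ : ℕ) ≤ (j₂ : ℕ) := le_of_lt hlt
        have : ((((j₂ : ℕ) - (j₁ : ℕ)) * K₁ : ℕ) : ℝ)
            = ((j₂ : ℕ) : ℝ) * K₁ - ((j₁ : ℕ) : ℝ) * K₁ := by
          rw [Nat.cast_mul, Nat.cast_sub hle]; ring
        rw [this]; ring
      rw [e1]
      have e2 : x₂ - x₁ - ((⌊x₂⌋ - ⌊x₁⌋ : ℤ) : ℝ) = Int.fract x₂ - Int.fract x₁ := by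
        unfold Int.fract; push_cast; ring
      rw [e2]
      have hd2 : |Int.fract x₂ - Int.fract x₁| * B < 1 := by
        calc |Int.fract x₂ - Int.fract x₁| * B
            = |Int.fract x₂ - Int.fract x₁| * |(B : ℝ)| := by rw [abs_of_pos hBR]
          _ = |(Int.fract x₂ - Int.fract x₁) * B| := (abs_mul _ _).symm
          _ = |Int.fract x₂ * B - Int.fract x₁ * B| := by ring_nf
          _ < 1 := hdiff
      rw [le_div_iff₀ hBR]
      linarith
  rcases hne.lt_or_gt with hlt | hlt
  · exact key i₁ i₂ hlt heq
  · exact key i₂ i₁ hlt heq.symm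

def WvN (δ u : ℝ) (N : ℕ) (τ : ℝ) : Prop :=
  ∃ k : ℤ, |k| ≤ (N : ℤ) ∧ (k : ℝ) * δ ≤ τ ∧ τ ≤ k * δ + u

noncomputable def wb (δ u : ℝ) (N : ℕ) : ℝ → Bool := fun τ => decide (WvN δ u N τ)

lemma wb_finiteVariation {δ u : ℝ} (hδ : 0 < δ) (hu : 0 < u) (N : ℕ) :
    ∃ I : Finset (ℝ × ℝ), (∀ q ∈ I, q.1 < q.2) ∧
      ∀ τ : ℝ, wb δ u N τ = true ↔ ∃ q ∈ I, τ ∈ Icc q.1 q.2 := by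
  refine ⟨(Finset.Icc (-(N : ℤ)) N).image
    (fun k : ℤ => (((k : ℝ) * δ, (k : ℝ) * δ + u) : ℝ × ℝ)), ?_, ?_⟩
  · intro q hq
    simp only [Finset.mem_image] at hq
    obtain ⟨k, _, rfl⟩ := hq
    dsimp only
    linarith
  · intro τ
    rw [wb, decide_eq_true_iff]
    constructor
    · rintro ⟨k, hk, h1, h2⟩
      exact ⟨((k : ℝ) * δ, (k : ℝ) * δ + u),
        Finset.mem_image_of_mem _
          (Finset.mem_Icc.mpr ⟨(abs_le.mp hk).1, (abs_le.mp hk).2⟩), ⟨h1, h2⟩⟩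
    · rintro ⟨q, hq, hmem⟩
      simp only [Finset.mem_image] at hq
      obtain ⟨k, hk, rfl⟩ := hq
      simp only [Finset.mem_Icc] at hk
      exact ⟨k, abs_le.mpr hk, hmem.1, hmem.2⟩

lemma wb_agree {δ u : ℝ} (hδ : 0 < δ) (hu : 0 < u) (N : ℕ) (H : ℝ)
    (hN : H + u ≤ (N : ℝ) * δ) (τ : ℝ) (hτ : |τ| ≤ H) :
    WvN δ u N τ ↔ Wv δ u τ := by
  constructor
  · rintro ⟨k, _, h1, h2⟩; exact ⟨k, h1, h2⟩
  · rintro ⟨k, h1, h2⟩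
    refine ⟨k, ?_, h1, h2⟩
    have habs := abs_le.mp hτ
    have hk1 : (k : ℝ) * δ ≤ H := by linarith
    have hk2 : -((N : ℝ) * δ) ≤ (k : ℝ) * δ := by linarith
    have u1 : (k : ℝ) ≤ N := le_of_mul_le_mul_right (by nlinarith) hδ
    have u2 : -(N : ℝ) ≤ k := by
      have h : (-(N : ℝ)) * δ ≤ (k : ℝ) * δ := by linarith
      exact le_of_mul_le_mul_right h hδ
    rw [abs_le]
    constructor
    · exact_mod_cast u2
    · exact_mod_cast u1

lemma measure_lb (K N : ℕ) (hK : 2 ≤ K) (hN : K ≤ N) :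
    (3 / 2 : ENNReal) ≤
      volume {τ ∈ Icc (0 : ℝ) 3 | wb (3 / K) (3 * (3 / K) / 4) N τ = true} := by
  have hK0 : (0 : ℝ) < K := by exact_mod_cast (by omega : 0 < K)
  set δ : ℝ := 3 / K with hδdef
  have hδ0 : 0 < δ := by positivity
  have hKδ : (K : ℝ) * δ = 3 := by rw [hδdef]; field_simp
  have hsub : (⋃ n ∈ Finset.range K, Icc ((n : ℝ) * δ) ((n : ℝ) * δ + 3 * δ / 4))
      ⊆ {τ ∈ Icc (0 : ℝ) 3 | wb δ (3 * δ / 4) N τ = true} := by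
    intro τ hτ
    simp only [mem_iUnion, Finset.mem_range] at hτ
    obtain ⟨n, hn, h1, h2⟩ := hτ
    have hn3 : ((n : ℝ) + 1) * δ ≤ 3 := by
      have : ((n : ℝ) + 1) ≤ K := by exact_mod_cast hn
      nlinarith
    refine ⟨⟨?_, ?_⟩, ?_⟩
    · have : (0 : ℝ) ≤ (n : ℝ) * δ := by positivity
      linarith
    · nlinarith
    · rw [wb, decide_eq_true_iff]
      refine ⟨n, ?_, by exact_mod_cast h1, by exact_mod_cast h2⟩
      have : (n : ℤ) ≤ N := by exact_mod_cast le_trans (le_of_lt hn) hN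
      simpa [abs_of_nonneg (by positivity : (0:ℤ) ≤ (n:ℤ))] using this
  refine le_trans ?_ (measure_mono hsub)
  rw [measure_biUnion_finset ?hd (fun n _ => measurableSet_Icc)]
  case hd =>
    intro m hm n hn hmn
    simp only [Function.onFun]
    refine Set.disjoint_left.mpr fun τ hτ1 hτ2 => ?_
    rcases hmn.lt_or_gt with h | h
    · have : ((m : ℝ) + 1) ≤ n := by exact_mod_cast h
      have := hτ1.2; have := hτ2.1; nlinarith
    · have : ((n : ℝ) + 1) ≤ m := by exact_mod_cast h
      have := hτ2.2; have := hτ1.1; nlinarith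
  have hvol : ∀ n ∈ Finset.range K,
      volume (Icc ((n : ℝ) * δ) ((n : ℝ) * δ + 3 * δ / 4))
        = ENNReal.ofReal (3 * δ / 4) := by
    intro n _
    rw [Real.volume_Icc]; ring_nf
  rw [Finset.sum_congr rfl hvol, Finset.sum_const, Finset.card_range, nsmul_eq_mul]
  have hmul : (K : ENNReal) * ENNReal.ofReal (3 * δ / 4)
      = ENNReal.ofReal ((K : ℝ) * (3 * δ / 4)) := by
    rw [ENNReal.ofReal_mul (by positivity), ENNReal.ofReal_natCast]
  rw [hmul]
  have hval : (K : ℝ) * (3 * δ / 4) = 9 / 4 := by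
    have : (K : ℝ) * (3 * δ / 4) = 3 * ((K : ℝ) * δ) / 4 := by ring
    rw [this, hKδ]; norm_num
  rw [hval]
  have h32 : (3 / 2 : ENNReal) = ENNReal.ofReal (3 / 2) := by
    rw [ENNReal.ofReal_div_of_pos (by norm_num)]
    norm_num
  rw [h32]
  exact ENNReal.ofReal_le_ofReal (by norm_num)

lemma measure_ub (K N : ℕ) (hK : 2 ≤ K) :
    ¬ ((3 / 2 : ENNReal) ≤
      volume {τ ∈ Icc (0 : ℝ) 3 | wb (3 / K) ((3 / K) / 4) N τ = true}) := by
  have hK0 : (0 : ℝ) < K := by exact_mod_cast (by omega : 0 < K)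
  set δ : ℝ := 3 / K with hδdef
  have hδ0 : 0 < δ := by positivity
  have hKδ : (K : ℝ) * δ = 3 := by rw [hδdef]; field_simp
  have hsub : {τ ∈ Icc (0 : ℝ) 3 | wb δ (δ / 4) N τ = true}
      ⊆ ⋃ n ∈ Finset.range (K + 1), Icc ((n : ℝ) * δ) ((n : ℝ) * δ + δ / 4) := by
    rintro τ ⟨⟨ht0, ht3⟩, hw⟩
    rw [wb, decide_eq_true_iff] at hw
    obtain ⟨k, _, h1, h2⟩ := hw
    have hk0 : 0 ≤ k := by
      by_contra hneg
      push_neg at hneg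
      have h' : k + 1 ≤ 0 := by omega
      have h'' : ((k : ℝ) + 1) ≤ 0 := by exact_mod_cast h'
      nlinarith
    have hkK : k ≤ (K : ℤ) := by
      by_contra hgt
      push_neg at hgt
      have h' : (K : ℤ) + 1 ≤ k := by omega
      have h'' : ((K : ℝ) + 1) ≤ (k : ℝ) := by exact_mod_cast h'
      nlinarith
    have hcast : ((k.toNat : ℕ) : ℝ) = (k : ℝ) := by exact_mod_cast Int.toNat_of_nonneg hk0
    simp only [mem_iUnion, Finset.mem_range]
    refine ⟨k.toNat, by omega, ?_, ?_⟩
    · rw [hcast]; exact h1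
    · rw [hcast]; exact h2
  intro hcontra
  have hle : volume {τ ∈ Icc (0 : ℝ) 3 | wb δ (δ / 4) N τ = true}
      ≤ ∑ n ∈ Finset.range (K + 1), ENNReal.ofReal (δ / 4) := by
    refine le_trans (measure_mono hsub) ?_
    refine le_trans (measure_biUnion_finset_le _ _) ?_
    refine Finset.sum_le_sum fun n _ => ?_
    rw [Real.volume_Icc]
    exact le_of_eq (by ring_nf)
  rw [Finset.sum_const, Finset.card_range, nsmul_eq_mul] at hle
  have heq : ((K + 1 : ℕ) : ENNReal) * ENNReal.ofReal (δ / 4)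
      = ENNReal.ofReal (((K : ℝ) + 1) * (δ / 4)) := by
    rw [← ENNReal.ofReal_natCast (K + 1), ← ENNReal.ofReal_mul (by positivity)]
    congr 1
    push_cast; ring
  rw [heq] at hle
  have hval : ((K : ℝ) + 1) * (δ / 4) ≤ 9 / 8 := by
    have h2K : (2 : ℝ) ≤ K := by exact_mod_cast hK
    have e : ((K : ℝ) + 1) * (δ / 4) = (3 * K + 3) / (4 * K) := by
      rw [hδdef]; field_simp
    rw [e, div_le_div_iff₀ (by positivity) (by norm_num)]
    nlinarith
  have hfin : volume {τ ∈ Icc (0 : ℝ) 3 | wb δ (δ / 4) N τ = true}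
      ≤ ENNReal.ofReal (9 / 8) :=
    le_trans hle (ENNReal.ofReal_le_ofReal hval)
  have h32 : (3 / 2 : ENNReal) = ENNReal.ofReal (3 / 2) := by
    rw [ENNReal.ofReal_div_of_pos (by norm_num)]; norm_num
  rw [h32] at hcontra
  have hcon : ENNReal.ofReal (3 / 2) ≤ ENNReal.ofReal (9 / 8) := le_trans hcontra hfin
  rw [ENNReal.ofReal_le_ofReal_iff (by norm_num)] at hcon
  norm_num at hcon

end SCLSep

/-- expressiveness separation: no STL(F,G) formula is equivalent
(on finite-variation Boolean signals) to the SCL formula `⟨flat_{[0,3]}, 1/2⟩ p`,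
which holds iff the Lebesgue measure of `{τ ∈ [0,3] : p holds}` is at least
`3/2`: for every STL(F,G) formula `ψ` there are finite-variation signals
`b₁, b₂` such that `b₁` satisfies the measure condition, `b₂` does not, yet `ψ`
evaluates identically on them. -/
theorem scl_more_expressive_than_stl (ψ : STLFG) :
    ∃ b₁ b₂ : ℝ → Bool, FiniteVariation b₁ ∧ FiniteVariation b₂ ∧
      ((3 / 2 : ENNReal) ≤ volume {τ ∈ Icc (0 : ℝ) 3 | b₁ τ = true}) ∧
      ¬ ((3 / 2 : ENNReal) ≤ volume {τ ∈ Icc (0 : ℝ) 3 | b₂ τ = true}) ∧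
      (ψ.sat b₁ 0 ↔ ψ.sat b₂ 0) := by
  classical
  set m := SCLSep.pc ψ with hm
  set B := 40 * (m + 1) with hB
  have hBpos : 0 < B := by omega
  set K₁ := max 2 (Nat.ceil (3 / SCLSep.mw ψ)) with hK₁
  obtain ⟨K, hKK₁, hdir⟩ := SCLSep.dirichlet ((SCLSep.PCs ψ).image (fun c => c / 3))
    B K₁ hBpos (by omega)
  have hK2 : 2 ≤ K := le_trans (le_max_left _ _) hKK₁
  have hKpos : (0 : ℝ) < K := by exact_mod_cast (by omega : 0 < K)
  have hmwpos := SCLSep.mw_pos ψ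
  set δ : ℝ := 3 / K with hδdef
  have hδpos : 0 < δ := by positivity
  set ε : ℝ := δ / B with hεdef
  have hεpos : 0 < ε := by positivity
  have hBr : (B : ℝ) = 40 * ((m : ℝ) + 1) := by rw [hB]; push_cast; ring
  have hδeq : δ = 40 * ((m : ℝ) + 1) * ε := by
    rw [hεdef, hBr]
    field_simp
  have hδmw : δ ≤ SCLSep.mw ψ := by
    have h1 : (3 / SCLSep.mw ψ) ≤ (Nat.ceil (3 / SCLSep.mw ψ) : ℝ) := Nat.le_ceil _
    have h2 : (K₁ : ℝ) ≤ K := by exact_mod_cast hKK₁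
    have h3 : ((Nat.ceil (3 / SCLSep.mw ψ)) : ℝ) ≤ K₁ := by
      exact_mod_cast le_max_right 2 (Nat.ceil (3 / SCLSep.mw ψ))
    have h4 : 3 / SCLSep.mw ψ ≤ (K : ℝ) := by linarith
    rw [hδdef, div_le_iff₀ hKpos]
    have := (div_le_iff₀ hmwpos).mp h4
    nlinarith
  have hnear : ∀ c ∈ SCLSep.PCs ψ, ∃ k : ℤ, |c - (k : ℝ) * δ| ≤ ε := by
    intro c hc
    obtain ⟨k, hk⟩ := hdir (c / 3) (Finset.mem_image_of_mem _ hc)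
    refine ⟨k, ?_⟩
    have e : c - (k : ℝ) * δ = (3 / (K : ℝ)) * (c / 3 * K - k) := by
      rw [hδdef]; field_simp
    rw [e, abs_mul, abs_of_pos (by positivity : (0 : ℝ) < 3 / (K : ℝ))]
    have h5 : (3 / (K : ℝ)) * |c / 3 * (K : ℝ) - k| ≤ (3 / (K : ℝ)) * (1 / B) :=
      mul_le_mul_of_nonneg_left hk (by positivity)
    have h6 : (3 / (K : ℝ)) * (1 / B) = ε := by
      rw [hεdef, hδdef]; field_simp
    linarith [h6 ▸ h5]
  have hM0 : SCLSep.M m ε δ (SCLSep.pc ψ) 0 0 := by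
    left
    refine ⟨0, 0, 0, by simp, by simp, ?_⟩
    rw [abs_zero]
    unfold SCLSep.capA
    rw [← hm]
    nlinarith [(Nat.cast_nonneg m : (0 : ℝ) ≤ (m : ℝ)), hεpos.le]
  have hiff := SCLSep.main_ind hεpos hδeq ψ (le_of_eq hm.symm) hδmw hnear 0 0 hM0
  set N := K * (Nat.ceil (SCLSep.hz ψ) + 2) with hN
  have hNK : K ≤ N := by
    rw [hN]; exact Nat.le_mul_of_pos_right K (by omega)
  have hz0 := SCLSep.hz_nonneg ψ
  have hzc := Nat.le_ceil (SCLSep.hz ψ)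
  have hδ3 : δ ≤ 3 := by
    rw [hδdef]
    have : (1 : ℝ) ≤ K := by exact_mod_cast (by omega : 1 ≤ K)
    rw [div_le_iff₀ hKpos]; nlinarith
  have hNδ : (N : ℝ) * δ = 3 * ((Nat.ceil (SCLSep.hz ψ) : ℝ) + 2) := by
    rw [hN, hδdef]; push_cast; field_simp
  have hwin : ∀ u : ℝ, u ≤ 3 → SCLSep.hz ψ + u ≤ (N : ℝ) * δ := by
    intro u hu; rw [hNδ]; linarith
  refine ⟨SCLSep.wb δ (3 * δ / 4) N, SCLSep.wb δ (δ / 4) N,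
    SCLSep.wb_finiteVariation hδpos (by positivity) N,
    SCLSep.wb_finiteVariation hδpos (by positivity) N,
    SCLSep.measure_lb K N hK2 hNK, SCLSep.measure_ub K N hK2, ?_⟩
  have e₁ : ψ.sat (SCLSep.wb δ (3 * δ / 4) N) 0 ↔
      SCLSep.satP ψ (SCLSep.Wv δ (3 * δ / 4)) 0 := by
    rw [show SCLSep.wb δ (3 * δ / 4) N
        = fun τ => decide (SCLSep.WvN δ (3 * δ / 4) N τ) from rfl]
    rw [SCLSep.sat_iff_satP]
    exact SCLSep.satP_congr ψ _ _ 0 (fun τ hτ =>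
      SCLSep.wb_agree hδpos (by positivity) N (SCLSep.hz ψ)
        (hwin _ (by linarith)) τ (by rwa [sub_zero] at hτ))
  have e₂ : ψ.sat (SCLSep.wb δ (δ / 4) N) 0 ↔
      SCLSep.satP ψ (SCLSep.Wv δ (δ / 4)) 0 := by
    rw [show SCLSep.wb δ (δ / 4) N
        = fun τ => decide (SCLSep.WvN δ (δ / 4) N τ) from rfl]
    rw [SCLSep.sat_iff_satP]
    exact SCLSep.satP_congr ψ _ _ 0 (fun τ hτ =>
      SCLSep.wb_agree hδpos (by positivity) N (SCLSep.hz ψ)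
        (hwin _ (by linarith)) τ (by rwa [sub_zero] at hτ))
  rw [e₁, e₂]
  exact hiff.symm
end

section
/- Uniform-perturbation bound for the convolution robustness: let g, g' : ℝ → ℝ be measurable with sup_τ |g(τ) - g'(τ)| ≤ ε, let k_T be a bounded kernel and p ∈ [0,1], and define R(h) = max{r : (k_T * [h > r])(0) ≥ p} whenever the max exists. If R(g) and R(g') exist, then |R(g) - R(g')| ≤ ε. -/
open MeasureTheory Set

lemma scl_aux_mono (k : ℝ → ℝ) (T₀ T₁ : ℝ) (hT : T₀ ≤ T₁)
    (hkint : IntervalIntegrable k volume T₀ T₁)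
    (hkpos : ∀ x ∈ Icc T₀ T₁, 0 ≤ k x) (A B : Set ℝ)
    (hA : MeasurableSet A) (hB : MeasurableSet B) (hAB : A ⊆ B) :
    (∫ τ in T₀..T₁, k τ * A.indicator (fun _ => (1 : ℝ)) τ) ≤
      ∫ τ in T₀..T₁, k τ * B.indicator (fun _ => (1 : ℝ)) τ := by
  have haesm : AEStronglyMeasurable k (volume.restrict (Set.uIoc T₀ T₁)) := by
    rw [Set.uIoc_of_le hT]; exact hkint.aestronglyMeasurable
  have hiA : IntervalIntegrable (fun τ => k τ * A.indicator (fun _ => (1:ℝ)) τ)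
      volume T₀ T₁ := by
    refine hkint.mono_fun (haesm.mul ?_) ?_
    · exact ((measurable_const.indicator hA)).aestronglyMeasurable
    · filter_upwards with x
      rw [Real.norm_eq_abs, Real.norm_eq_abs, abs_mul]
      have : |A.indicator (fun _ => (1:ℝ)) x| ≤ 1 := by
        by_cases hx : x ∈ A <;> simp [hx]
      nlinarith [abs_nonneg (k x), abs_nonneg (A.indicator (fun _ => (1:ℝ)) x)]
  have hiB : IntervalIntegrable (fun τ => k τ * B.indicator (fun _ => (1:ℝ)) τ)
      volume T₀ T₁ := by
    refine hkint.mono_fun (haesm.mul ?_) ?_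
    · exact ((measurable_const.indicator hB)).aestronglyMeasurable
    · filter_upwards with x
      rw [Real.norm_eq_abs, Real.norm_eq_abs, abs_mul]
      have : |B.indicator (fun _ => (1:ℝ)) x| ≤ 1 := by
        by_cases hx : x ∈ B <;> simp [hx]
      nlinarith [abs_nonneg (k x), abs_nonneg (B.indicator (fun _ => (1:ℝ)) x)]
  refine intervalIntegral.integral_mono_on hT hiA hiB ?_
  intro x hx
  have hk := hkpos x hx
  have hind : A.indicator (fun _ => (1:ℝ)) x ≤ B.indicator (fun _ => (1:ℝ)) x := by
    by_cases hxA : x ∈ A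
    · simp [hxA, hAB hxA]
    · by_cases hxB : x ∈ B <;> simp [hxA, hxB]
  exact mul_le_mul_of_nonneg_left hind hk

/-- uniform-perturbation bound: if `‖g - g'‖_∞ ≤ ε` and the maxima
`R(g) = m`, `R(g') = m'` of `{r : (k_T * [· > r])(0) ≥ p}` exist, then
`|R(g) - R(g')| ≤ ε`. -/
theorem scl_robustness_perturbation (k : ℝ → ℝ) (T₀ T₁ p ε : ℝ) (hT : T₀ ≤ T₁)
    (hk1 : (∫ τ in T₀..T₁, k τ) = 1) (hkpos : ∀ x ∈ Icc T₀ T₁, 0 < k x)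
    (hp : p ∈ Icc (0 : ℝ) 1) (g g' : ℝ → ℝ) (hg : Measurable g)
    (hg' : Measurable g') (hclose : ∀ τ, |g τ - g' τ| ≤ ε) (m m' : ℝ)
    (hmax : IsGreatest {r : ℝ | p ≤ ∫ τ in T₀..T₁,
        k τ * Set.indicator {u | r < g u} (fun _ => (1 : ℝ)) τ} m)
    (hmax' : IsGreatest {r : ℝ | p ≤ ∫ τ in T₀..T₁,
        k τ * Set.indicator {u | r < g' u} (fun _ => (1 : ℝ)) τ} m') :
    |m - m'| ≤ ε := by
  have hkint : IntervalIntegrable k volume T₀ T₁ := by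
    by_contra h
    rw [intervalIntegral.integral_undef h] at hk1
    exact one_ne_zero hk1.symm
  have hknn : ∀ x ∈ Icc T₀ T₁, 0 ≤ k x := fun x hx => (hkpos x hx).le
  have key : ∀ (h₁ h₂ : ℝ → ℝ), Measurable h₁ → Measurable h₂ →
      (∀ τ, |h₁ τ - h₂ τ| ≤ ε) → ∀ (r : ℝ),
      (p ≤ ∫ τ in T₀..T₁, k τ * Set.indicator {u | r < h₁ u} (fun _ => (1:ℝ)) τ) →
      p ≤ ∫ τ in T₀..T₁, k τ * Set.indicator {u | r - ε < h₂ u} (fun _ => (1:ℝ)) τ := by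
    intro h₁ h₂ hm₁ hm₂ hc r hr
    refine hr.trans (scl_aux_mono k T₀ T₁ hT hkint hknn _ _
      (measurableSet_lt measurable_const hm₁)
      (measurableSet_lt measurable_const hm₂) ?_)
    intro u hu
    have := hc u
    simp only [Set.mem_setOf_eq] at hu ⊢
    rw [abs_le] at this
    linarith [this.1, this.2]
  have h1 : m - ε ≤ m' := hmax'.2 (key g g' hg hg' hclose m hmax.1)
  have h2 : m' - ε ≤ m := hmax.2 (key g' g hg' hg
    (fun τ => by rw [abs_sub_comm]; exact hclose τ) m' hmax'.1)
  rw [abs_sub_le_iff]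
  constructor <;> linarith
end
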